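/- Let L ⊆ ℝⁿ be a full-rank lattice, x ∈ ℝⁿ, and v ∈ L a point with ‖x − v‖ = dist(x, L). Then for every sublattice L' ⊆ L (a discrete subgroup of L that is full rank in its real span), the orthogonal projection of x − v onto span(L') has Euclidean norm at most μ(L'). -/

import Mathlib

/-!
Write `u = x - v` and let `P` be the orthogonal projection onto `V = span ℝ L'`. Since `v` is a
closest point of `L` to `x` and `v + L' ⊆ L`, we have `‖u‖ ≤ ‖u - w‖` for every `w ∈ L'`.
By Pythagoras both sides differ from `‖P u‖²` and `‖P u - w‖²` by the same term `‖u - P u‖²`,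
so `‖P u‖ ≤ dist (P u) L'`. The latter is at most the covering radius of `L'`, which is finite
because `L'`, a subgroup of the discrete and hence finitely generated group `L`, is finitely
generated: rounding the coefficients of a point of `V` with respect to
a finite generating set `S` moves it into `L'` by at most `∑ s ∈ S, ‖s‖`.
-/

open Metric Submodule
noncomputable section

/-- The covering radius of a lattice (given as a set): the supremum, over points `x` in the
real span of `A`, of the distance from `x` to `A`. -/
def covRad {E : Type*} [NormedAddCommGroup E] [NormedSpace ℝ E] (A : Set E) : ℝ :=
  sSup ((fun x => Metric.infDist x A) '' ((Submodule.span ℝ A : Submodule ℝ E) : Set E))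

section Projection

variable {F : Type*} [NormedAddCommGroup F] [InnerProductSpace ℝ F]

theorem Submodule.norm_sub_sq_eq_norm_starProjection_sub_sq_add (K : Submodule ℝ F)
    [K.HasOrthogonalProjection] (u : F) {w : F} (hw : w ∈ K) :
    ‖u - w‖ ^ 2 = ‖K.starProjection u - w‖ ^ 2 + ‖u - K.starProjection u‖ ^ 2 := by
  have horth : inner ℝ (K.starProjection u - w) (u - K.starProjection u) = 0 :=
    K.inner_right_of_mem_orthogonal (K.sub_mem (K.starProjection_apply_mem u) hw)
      (K.sub_starProjection_mem_orthogonal u)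
  simpa only [sq, sub_add_sub_cancel'] using norm_add_sq_eq_norm_sq_add_norm_sq_real horth

theorem Submodule.norm_starProjection_le_norm_starProjection_sub (K : Submodule ℝ F)
    [K.HasOrthogonalProjection] {u w : F} (hw : w ∈ K) (h : ‖u‖ ≤ ‖u - w‖) :
    ‖K.starProjection u‖ ≤ ‖K.starProjection u - w‖ := by
  have hu := K.norm_sub_sq_eq_norm_starProjection_sub_sq_add u K.zero_mem
  have huw := K.norm_sub_sq_eq_norm_starProjection_sub_sq_add u hw
  rw [sub_zero, sub_zero] at hu
  have hsq : ‖u‖ ^ 2 ≤ ‖u - w‖ ^ 2 := pow_le_pow_left₀ (norm_nonneg u) h 2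
  exact (pow_le_pow_iff_left₀ (norm_nonneg _) (norm_nonneg _) two_ne_zero).1 (by linarith)

end Projection

section CoveringRadius

variable {E : Type*} [NormedAddCommGroup E] [NormedSpace ℝ E]

theorem infDist_span_int_le_sum_norm {S : Finset E} {y : E}
    (hy : y ∈ span ℝ (S : Set E)) :
    infDist y (span ℤ (S : Set E) : Set E) ≤ ∑ s ∈ S, ‖s‖ := by
  obtain ⟨f, -, rfl⟩ := mem_span_finset.1 hy
  have hround : ∑ s ∈ S, round (f s) • s ∈ span ℤ (S : Set E) :=
    sum_mem fun s hs => zsmul_mem (subset_span hs) _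
  calc infDist (∑ s ∈ S, f s • s) (span ℤ (S : Set E) : Set E)
      ≤ ‖∑ s ∈ S, f s • s - ∑ s ∈ S, round (f s) • s‖ :=
        (infDist_le_dist_of_mem hround).trans_eq (dist_eq_norm _ _)
    _ = ‖∑ s ∈ S, (f s - round (f s)) • s‖ := by
        simp only [← Finset.sum_sub_distrib, sub_smul, Int.cast_smul_eq_zsmul]
    _ ≤ ∑ s ∈ S, |f s - round (f s)| * ‖s‖ :=
        (norm_sum_le _ _).trans_eq (by simp only [norm_smul, Real.norm_eq_abs])
    _ ≤ ∑ s ∈ S, ‖s‖ := Finset.sum_le_sum fun s _ =>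
        mul_le_of_le_one_left (norm_nonneg s) ((abs_sub_round _).trans (by norm_num))

theorem bddAbove_infDist_image_span_of_fg {L' : Submodule ℤ E} (hL' : L'.FG) :
    BddAbove ((fun x => infDist x (L' : Set E)) '' (span ℝ (L' : Set E) : Set E)) := by
  obtain ⟨S, rfl⟩ := hL'
  refine ⟨∑ s ∈ S, ‖s‖, ?_⟩
  rintro _ ⟨y, hy, rfl⟩
  rw [SetLike.mem_coe, span_span_of_tower] at hy
  exact infDist_span_int_le_sum_norm hy

theorem infDist_le_covRad_of_fg {L' : Submodule ℤ E} (hL' : L'.FG) {y : E}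
    (hy : y ∈ span ℝ (L' : Set E)) : infDist y (L' : Set E) ≤ covRad (L' : Set E) :=
  le_csSup (bddAbove_infDist_image_span_of_fg hL') ⟨y, hy, rfl⟩

end CoveringRadius

theorem norm_sub_le_norm_sub_sub_of_closest {E : Type*} [SeminormedAddCommGroup E]
    {L : AddSubgroup E} {x v w : E} (hv : v ∈ L) (hw : w ∈ L)
    (hclosest : ‖x - v‖ = infDist x (L : Set E)) : ‖x - v‖ ≤ ‖x - v - w‖ := by
  rw [hclosest, sub_sub, ← dist_eq_norm]
  exact infDist_le_dist_of_mem (L.add_mem hv hw)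

theorem proj_of_closest_vector_le_covRad
    (n : ℕ) (L : Submodule ℤ (EuclideanSpace ℝ (Fin n))) [DiscreteTopology L]
    (x : EuclideanSpace ℝ (Fin n)) (v : EuclideanSpace ℝ (Fin n)) (hv : v ∈ L)
    (hclosest : ‖x - v‖ = Metric.infDist x (L : Set (EuclideanSpace ℝ (Fin n))))
    (L' : Submodule ℤ (EuclideanSpace ℝ (Fin n))) (hL' : L' ≤ L) :
    ‖(orthogonalProjection (Submodule.span ℝ (L' : Set (EuclideanSpace ℝ (Fin n)))) (x - v) :
        EuclideanSpace ℝ (Fin n))‖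
      ≤ covRad (L' : Set (EuclideanSpace ℝ (Fin n))) := by
  set V := span ℝ (L' : Set (EuclideanSpace ℝ (Fin n)))
  have hfg : L'.FG := (Module.Finite.iff_fg.1 inferInstance : L.FG).of_le hL'
  have hproj : ‖V.starProjection (x - v)‖ ≤ infDist (V.starProjection (x - v)) L' := by
    rw [le_infDist ⟨0, L'.zero_mem⟩]
    intro w hw
    rw [dist_eq_norm]
    exact V.norm_starProjection_le_norm_starProjection_sub (subset_span hw)
      (norm_sub_le_norm_sub_sub_of_closest (L := L.toAddSubgroup) hv (hL' hw) hclosest)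
  exact hproj.trans (infDist_le_covRad_of_fg hfg (V.starProjection_apply_mem _))
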